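/- arXiv:2512.19721 — 4 statements merged into one kernel-verified Lean document; each statement's English description precedes it below -/
import Mathlib

section
/- The Tanimoto (min–max Jaccard) distance is a metric on the nonnegative orthant ℝ₊^d: for all u, v, w ∈ ℝ₊^d, d_Tan(u,v) ≥ 0 with d_Tan(u,v) = 0 if and only if u = v, d_Tan(u,v) = d_Tan(v,u), and d_Tan(u,w) ≤ d_Tan(u,v) + d_Tan(v,w). -/
/-!
For nonnegative `u, v`, `Σ max = (‖u‖₁ + ‖v‖₁ + ‖u - v‖₁) / 2` and
`Σ min = (‖u‖₁ + ‖v‖₁ - ‖u - v‖₁) / 2`, so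
`d_Tan(u, v) = 2‖u - v‖₁ / (‖u‖₁ + ‖v‖₁ + ‖u - v‖₁)`.
This is the Steinhaus transform of the `ℓ¹` metric with base point `0`, and the Steinhaus
transform `2 d(x, y) / (d(x, o) + d(y, o) + d(x, y))` of any pseudometric is again one:
since `t ↦ t / (s + t)` is increasing, `d(x, z)` may be replaced by `d(x, y) + d(y, z)`, and
then each of the two resulting fractions only grows when its denominator is shrunk to the
one of `d(x, y)`, resp. `d(y, z)`, using the triangle inequality through `o`.
-/

open Finset

/-- Tanimoto (min–max Jaccard) similarity on nonnegative vectors: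
`J_Tan(u,v) = (Σⱼ min uⱼ vⱼ) / (Σⱼ max uⱼ vⱼ)` when the denominator is positive,
and `1` otherwise (which, for nonnegative vectors, happens exactly when `u = v = 0`). -/
noncomputable def JTan {ι : Type*} [Fintype ι] (u v : ι → ℝ) : ℝ :=
  if 0 < ∑ j, max (u j) (v j) then (∑ j, min (u j) (v j)) / (∑ j, max (u j) (v j)) else 1

/-- Tanimoto distance `d_Tan = 1 − J_Tan`. -/
noncomputable def dTan {ι : Type*} [Fintype ι] (u v : ι → ℝ) : ℝ := 1 - JTan u v

lemma div_add_le_div_add_of_le {s t t' : ℝ} (hs : 0 ≤ s) (ht : 0 ≤ t) (h : t ≤ t') :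
    t / (s + t) ≤ t' / (s + t') := by
  rcases ht.eq_or_lt with rfl | ht
  · simp only [zero_div]; positivity
  · rw [div_le_div_iff₀ (by positivity) (by linarith)]
    nlinarith [mul_le_mul_of_nonneg_left h hs]

lemma div_le_div_of_nonneg_left_of_le {a b c : ℝ} (ha : 0 ≤ a) (hac : a ≤ c) (hcb : c ≤ b) :
    a / b ≤ a / c := by
  rcases ha.eq_or_lt with rfl | ha
  · simp
  · exact div_le_div_of_nonneg_left ha.le (ha.trans_le hac) hcb

section Steinhaus

variable {α : Type*} [PseudoMetricSpace α]

noncomputable def steinhausDist (o x y : α) : ℝ :=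
  2 * dist x y / (dist x o + dist y o + dist x y)

lemma steinhausDist_nonneg (o x y : α) : 0 ≤ steinhausDist o x y := by
  unfold steinhausDist; positivity

lemma steinhausDist_comm (o x y : α) : steinhausDist o x y = steinhausDist o y x := by
  simp only [steinhausDist, dist_comm x y, add_comm (dist x o)]

lemma steinhausDist_eq_zero_iff (o x y : α) : steinhausDist o x y = 0 ↔ dist x y = 0 := by
  have hx := dist_nonneg (x := x) (y := o)
  have hy := dist_nonneg (x := y) (y := o)
  have hxy := dist_nonneg (x := x) (y := y)
  rw [steinhausDist, div_eq_zero_iff]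
  constructor
  · rintro (h | h) <;> linarith
  · intro h; left; rw [h, mul_zero]

lemma steinhausDist_triangle (o x y z : α) :
    steinhausDist o x z ≤ steinhausDist o x y + steinhausDist o y z := by
  have hxo := dist_nonneg (x := x) (y := o)
  have hyo := dist_nonneg (x := y) (y := o)
  have hzo := dist_nonneg (x := z) (y := o)
  have hxy := dist_nonneg (x := x) (y := y)
  have hyz := dist_nonneg (x := y) (y := z)
  have hyo_le_x : dist y o ≤ dist x o + dist x y := by
    linarith [dist_triangle y x o, dist_comm x y]
  have hyo_le_z : dist y o ≤ dist z o + dist y z := by linarith [dist_triangle y z o]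
  have key : dist x z / (dist x o + dist z o + dist x z)
      ≤ dist x y / (dist x o + dist y o + dist x y)
        + dist y z / (dist y o + dist z o + dist y z) :=
    calc dist x z / (dist x o + dist z o + dist x z)
        ≤ (dist x y + dist y z) / (dist x o + dist z o + (dist x y + dist y z)) :=
          div_add_le_div_add_of_le (by positivity) dist_nonneg (dist_triangle x y z)
      _ = dist x y / (dist x o + dist z o + (dist x y + dist y z))
            + dist y z / (dist x o + dist z o + (dist x y + dist y z)) := add_div _ _ _
      _ ≤ _ := add_le_add
          (div_le_div_of_nonneg_left_of_le hxy (by linarith) (by linarith))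
          (div_le_div_of_nonneg_left_of_le hyz (by linarith) (by linarith))
  simp only [steinhausDist, mul_div_assoc]
  linarith

end Steinhaus

lemma sum_abs_sub_eq_sum_max_sub_sum_min {ι : Type*} [Fintype ι] (u v : ι → ℝ) :
    ∑ j, |u j - v j| = ∑ j, max (u j) (v j) - ∑ j, min (u j) (v j) := by
  rw [← sum_sub_distrib]
  exact sum_congr rfl fun j _ => (max_sub_min_eq_abs' _ _).symm

lemma sum_add_sum_eq_sum_min_add_sum_max {ι : Type*} [Fintype ι] (u v : ι → ℝ) :
    ∑ j, u j + ∑ j, v j = ∑ j, min (u j) (v j) + ∑ j, max (u j) (v j) := by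
  rw [← sum_add_distrib, ← sum_add_distrib]
  exact sum_congr rfl fun j _ => (min_add_max _ _).symm

lemma dTan_eq_steinhausDist {ι : Type*} [Fintype ι] {u v : ι → ℝ}
    (hu : ∀ j, 0 ≤ u j) (hv : ∀ j, 0 ≤ v j) :
    dTan u v = steinhausDist 0 (WithLp.toLp 1 u) (WithLp.toLp 1 v) := by
  have huv : dist (WithLp.toLp 1 u) (WithLp.toLp 1 v) = ∑ j, |u j - v j| := by
    simp [PiLp.dist_eq_of_L1, Real.dist_eq]
  have hu0 : dist (WithLp.toLp 1 u) 0 = ∑ j, u j := by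
    simp [PiLp.norm_eq_of_L1, abs_of_nonneg (hu _)]
  have hv0 : dist (WithLp.toLp 1 v) 0 = ∑ j, v j := by
    simp [PiLp.norm_eq_of_L1, abs_of_nonneg (hv _)]
  have habs := sum_abs_sub_eq_sum_max_sub_sum_min u v
  have hsum := sum_add_sum_eq_sum_min_add_sum_max u v
  have hmin : 0 ≤ ∑ j, min (u j) (v j) := sum_nonneg fun j _ => le_min (hu j) (hv j)
  have hmin_le : ∑ j, min (u j) (v j) ≤ ∑ j, max (u j) (v j) :=
    sum_le_sum fun j _ => min_le_max
  rw [steinhausDist, huv, hu0, hv0, dTan, JTan]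
  split_ifs with hpos
  · rw [show ∑ j, u j + ∑ j, v j + ∑ j, |u j - v j| = 2 * ∑ j, max (u j) (v j) by linarith]
    field_simp
    linarith
  · rw [show ∑ j, |u j - v j| = 0 by linarith]
    simp

/-- The Tanimoto distance is a metric on the nonnegative orthant `ℝ₊^d`:
nonnegativity, identity of indiscernibles, symmetry, and the triangle inequality. -/
theorem dTan_is_metric {d : ℕ} (u v w : Fin d → ℝ)
    (hu : ∀ j, 0 ≤ u j) (hv : ∀ j, 0 ≤ v j) (hw : ∀ j, 0 ≤ w j) :
    0 ≤ dTan u v ∧ (dTan u v = 0 ↔ u = v) ∧ dTan u v = dTan v u ∧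
      dTan u w ≤ dTan u v + dTan v w := by
  rw [dTan_eq_steinhausDist hu hv, dTan_eq_steinhausDist hv hu, dTan_eq_steinhausDist hu hw,
    dTan_eq_steinhausDist hv hw, steinhausDist_eq_zero_iff, dist_eq_zero,
    (WithLp.toLp_injective 1).eq_iff]
  exact ⟨steinhausDist_nonneg _ _ _, Iff.rfl, steinhausDist_comm _ _ _,
    steinhausDist_triangle _ _ _ _⟩
end

section
/- The peak-to-peak distance d_peak is a metric on ℝⁿ: for all A, B, C ∈ ℝⁿ, d_peak(A,B) ≥ 0 with d_peak(A,B) = 0 if and only if A = B, d_peak(A,B) = d_peak(B,A), and d_peak(A,C) ≤ d_peak(A,B) + d_peak(B,C). Moreover d_peak(A,B) = d_Tan(φ(A), φ(B)), the Tanimoto distance applied to the sign-split embeddings. -/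
open Finset

/-- Sign-split embedding `φ : ℝⁿ → ℝ₊^{2n}`, indexed by `Fin n × Fin 2`. -/
noncomputable def phi {n : ℕ} (X : Fin n → ℝ) : Fin n × Fin 2 → ℝ :=
  fun p => if p.2 = 0 then max (X p.1) 0 else max (-(X p.1)) 0

/-- Sign-aware intersection `N(A,B) = Σ_{i : AᵢBᵢ > 0} min |Aᵢ| |Bᵢ|`. -/
noncomputable def Npeak {n : ℕ} (A B : Fin n → ℝ) : ℝ :=
  ∑ i ∈ Finset.univ.filter (fun i => 0 < A i * B i), min |A i| |B i|

/-- Peak-to-peak union `U_peak(A,B) = Σᵢ (max Aᵢ⁺ Bᵢ⁺ + max Aᵢ⁻ Bᵢ⁻)`. -/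
noncomputable def Upeak {n : ℕ} (A B : Fin n → ℝ) : ℝ :=
  ∑ i, (max (max (A i) 0) (max (B i) 0) + max (max (-(A i)) 0) (max (-(B i)) 0))

/-- Peak-to-peak similarity `J_peak = N/U_peak` (and `1` when `U_peak = 0`). -/
noncomputable def Jpeak {n : ℕ} (A B : Fin n → ℝ) : ℝ :=
  if 0 < Upeak A B then Npeak A B / Upeak A B else 1

/-- Peak-to-peak distance `d_peak = 1 − J_peak`. -/
noncomputable def dpeak {n : ℕ} (A B : Fin n → ℝ) : ℝ := 1 - Jpeak A B

/-!
Coordinatewise, `min a⁺ b⁺ + min a⁻ b⁻` is `min |a| |b|` when `a` and `b` have the same strict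
sign and `0` otherwise, so `d_peak` is the Tanimoto distance of the sign-split embeddings, and `φ`
is injective since `a = a⁺ - a⁻`. For nonnegative vectors
`2 Σ max (uⱼ, vⱼ) = ‖u‖₁ + ‖v‖₁ + ‖u - v‖₁`, so the Tanimoto distance is the Steinhaus transform
`2 d(u, v) / (d(u, 0) + d(v, 0) + d(u, v))` of the `ℓ¹` metric, and the triangle inequality follows
because `t / (K + t)` increases in `t` and decreases in `K`.
-/

lemma div_add_le_div_add {𝕜 : Type*} [Field 𝕜] [LinearOrder 𝕜] [IsStrictOrderedRing 𝕜]
    {K L x y : 𝕜} (hL : 0 ≤ L) (hLK : L ≤ K) (hx : 0 ≤ x) (hxy : x ≤ y) :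
    x / (K + x) ≤ y / (L + y) := by
  rcases hx.eq_or_lt with rfl | hx
  · rw [add_zero, zero_div]
    exact div_nonneg hxy (add_nonneg hL hxy)
  · rw [div_le_div_iff₀ (by linarith) (by linarith)]
    nlinarith

theorem steinhaus_dist_triangle {α : Type*} [PseudoMetricSpace α] (o x y z : α) :
    dist x z / (dist x o + dist z o + dist x z) ≤
      dist x y / (dist x o + dist y o + dist x y) +
        dist y z / (dist y o + dist z o + dist y z) := by
  have hxy := dist_nonneg (x := x) (y := y)
  have hyz := dist_nonneg (x := y) (y := z)
  calc dist x z / (dist x o + dist z o + dist x z)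
      ≤ (dist x y + dist y z) / (dist x o + dist z o + (dist x y + dist y z)) :=
        div_add_le_div_add (by positivity) le_rfl dist_nonneg (dist_triangle x y z)
    _ = dist x y / (dist x o + dist z o + dist y z + dist x y) +
          dist y z / (dist x o + dist z o + dist x y + dist y z) := by
        rw [add_div]; congr 2 <;> ring
    _ ≤ dist x y / (dist x o + dist y o + dist x y) +
          dist y z / (dist y o + dist z o + dist y z) :=
        add_le_add
          (div_add_le_div_add (by positivity) (by linarith [dist_triangle y z o]) hxy le_rfl)
          (div_add_le_div_add (by positivity) (by linarith [dist_triangle_left y o x]) hyz le_rfl)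

section Tanimoto

variable {ι : Type*} [Fintype ι] {u v w : ι → ℝ}

lemma two_mul_sum_max (u v : ι → ℝ) :
    2 * ∑ j, max (u j) (v j) = ∑ j, u j + ∑ j, v j + ∑ j, |u j - v j| := by
  simp only [mul_sum, ← sum_add_distrib]
  refine sum_congr rfl fun j _ => ?_
  rcases le_total (u j) (v j) with h | h
  · rw [max_eq_right h, abs_of_nonpos (sub_nonpos.2 h)]; ring
  · rw [max_eq_left h, abs_of_nonneg (sub_nonneg.2 h)]; ring

lemma sum_abs_sub_le_sum_max (hu : 0 ≤ u) (hv : 0 ≤ v) :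
    ∑ j, |u j - v j| ≤ ∑ j, max (u j) (v j) :=
  sum_le_sum fun j _ => abs_sub_le_iff.2
    ⟨(sub_le_self _ (hv j)).trans (le_max_left _ _),
      (sub_le_self _ (hu j)).trans (le_max_right _ _)⟩

-- Also when `Σ max = 0`: then `Σ |u - v| = 0` too, and `0 / 0 = 0`.
lemma dTan_eq_sum_abs_sub_div (hu : 0 ≤ u) (hv : 0 ≤ v) :
    dTan u v = (∑ j, |u j - v j|) / ∑ j, max (u j) (v j) := by
  rw [dTan, JTan]
  split_ifs with hpos
  · have hdiff : ∑ j, max (u j) (v j) - ∑ j, min (u j) (v j) = ∑ j, |u j - v j| := by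
      rw [← sum_sub_distrib]
      exact sum_congr rfl fun j _ => by rw [max_sub_min_eq_abs, abs_sub_comm]
    rw [← hdiff]
    field_simp
  · have hmax : ∑ j, max (u j) (v j) = 0 :=
      le_antisymm (not_lt.1 hpos) (sum_nonneg fun j _ => le_max_of_le_left (hu j))
    have habs : ∑ j, |u j - v j| = 0 :=
      le_antisymm (hmax ▸ sum_abs_sub_le_sum_max hu hv) (sum_nonneg fun j _ => abs_nonneg _)
    rw [habs, hmax, div_zero, sub_self]

lemma dTan_nonneg (hu : 0 ≤ u) (hv : 0 ≤ v) : 0 ≤ dTan u v := by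
  rw [dTan_eq_sum_abs_sub_div hu hv]
  exact div_nonneg (sum_nonneg fun j _ => abs_nonneg _)
    (sum_nonneg fun j _ => le_max_of_le_left (hu j))

lemma dTan_comm (u v : ι → ℝ) : dTan u v = dTan v u := by
  simp only [dTan, JTan, min_comm, max_comm]

lemma dTan_eq_zero_iff (hu : 0 ≤ u) (hv : 0 ≤ v) : dTan u v = 0 ↔ u = v := by
  have habs_nonneg : ∀ j ∈ univ, 0 ≤ |u j - v j| := fun j _ => abs_nonneg _
  have hmax_zero : ∑ j, max (u j) (v j) = 0 → ∑ j, |u j - v j| = 0 := fun h =>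
    le_antisymm (h ▸ sum_abs_sub_le_sum_max hu hv) (sum_nonneg habs_nonneg)
  rw [dTan_eq_sum_abs_sub_div hu hv, div_eq_zero_iff, or_iff_left_of_imp hmax_zero,
    sum_eq_zero_iff_of_nonneg habs_nonneg, funext_iff]
  simp [sub_eq_zero]

lemma dist_toLp_one (u v : ι → ℝ) :
    dist (WithLp.toLp 1 u) (WithLp.toLp 1 v) = ∑ j, |u j - v j| := by
  simp [PiLp.dist_eq_of_L1, Real.dist_eq]

lemma dTan_eq_steinhaus (hu : 0 ≤ u) (hv : 0 ≤ v) :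
    dTan u v = 2 * (dist (WithLp.toLp 1 u) (WithLp.toLp 1 v) /
      (dist (WithLp.toLp 1 u) (WithLp.toLp 1 0) + dist (WithLp.toLp 1 v) (WithLp.toLp 1 0) +
        dist (WithLp.toLp 1 u) (WithLp.toLp 1 v))) := by
  have hsum : ∀ x : ι → ℝ, 0 ≤ x → dist (WithLp.toLp 1 x) (WithLp.toLp 1 0) = ∑ j, x j :=
    fun x hx => by
      rw [dist_toLp_one]
      exact sum_congr rfl fun j _ => by rw [Pi.zero_apply, sub_zero, abs_of_nonneg (hx j)]
  rw [dTan_eq_sum_abs_sub_div hu hv, hsum u hu, hsum v hv, dist_toLp_one, ← two_mul_sum_max,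
    ← mul_div_assoc, mul_div_mul_left _ _ two_ne_zero]

lemma dTan_triangle (hu : 0 ≤ u) (hv : 0 ≤ v) (hw : 0 ≤ w) :
    dTan u w ≤ dTan u v + dTan v w := by
  rw [dTan_eq_steinhaus hu hw, dTan_eq_steinhaus hu hv, dTan_eq_steinhaus hv hw]
  linarith [steinhaus_dist_triangle (WithLp.toLp 1 0) (WithLp.toLp 1 u) (WithLp.toLp 1 v)
    (WithLp.toLp 1 w)]

end Tanimoto

section SignSplit

variable {n : ℕ}

lemma phi_apply_zero (X : Fin n → ℝ) (i : Fin n) : phi X (i, 0) = (X i)⁺ := rfl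

lemma phi_apply_one (X : Fin n → ℝ) (i : Fin n) : phi X (i, 1) = (X i)⁻ := rfl

lemma phi_nonneg (X : Fin n → ℝ) : 0 ≤ phi X := fun p => by
  unfold phi
  split_ifs <;> exact le_max_right _ _

lemma phi_injective : Function.Injective (phi (n := n)) := fun X Y h =>
  funext fun i => posPart_negPart_inj.1
    ⟨by rw [← phi_apply_zero, h, phi_apply_zero], by rw [← phi_apply_one, h, phi_apply_one]⟩

lemma min_posPart_add_min_negPart {R : Type*} [Ring R] [LinearOrder R] [IsStrictOrderedRing R]
    (a b : R) : min a⁺ b⁺ + min a⁻ b⁻ = if 0 < a * b then min |a| |b| else 0 := by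
  split_ifs with h
  · rcases mul_pos_iff.1 h with ⟨ha, hb⟩ | ⟨ha, hb⟩
    · simp [posPart_of_nonneg, negPart_of_nonneg, ha.le, hb.le, abs_of_pos, ha, hb]
    · simp [posPart_of_nonpos, negPart_of_nonpos, ha.le, hb.le, abs_of_neg, ha, hb]
  · rcases mul_nonpos_iff.1 (not_lt.1 h) with ⟨ha, hb⟩ | ⟨ha, hb⟩ <;>
      simp [posPart_of_nonpos, negPart_of_nonneg, ha, hb]

lemma sum_min_phi_eq_Npeak (A B : Fin n → ℝ) :
    ∑ j, min (phi A j) (phi B j) = Npeak A B := by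
  rw [Npeak, sum_filter, Fintype.sum_prod_type]
  exact sum_congr rfl fun i _ => by
    rw [Fin.sum_univ_two, phi_apply_zero, phi_apply_zero, phi_apply_one, phi_apply_one,
      min_posPart_add_min_negPart]

lemma sum_max_phi_eq_Upeak (A B : Fin n → ℝ) :
    ∑ j, max (phi A j) (phi B j) = Upeak A B := by
  rw [Upeak, Fintype.sum_prod_type]
  exact sum_congr rfl fun i _ => Fin.sum_univ_two _

lemma dpeak_eq_dTan_phi (A B : Fin n → ℝ) : dpeak A B = dTan (phi A) (phi B) := by
  rw [dpeak, dTan, Jpeak, JTan, sum_min_phi_eq_Npeak, sum_max_phi_eq_Upeak]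

end SignSplit

/-- `d_peak` is a metric on `ℝⁿ` (nonnegativity, identity of indiscernibles, symmetry,
triangle inequality), and moreover `d_peak(A,B) = d_Tan(φ(A), φ(B))`. -/
theorem dpeak_is_metric {n : ℕ} (A B C : Fin n → ℝ) :
    0 ≤ dpeak A B ∧ (dpeak A B = 0 ↔ A = B) ∧ dpeak A B = dpeak B A ∧
      dpeak A C ≤ dpeak A B + dpeak B C ∧
      dpeak A B = dTan (phi A) (phi B) := by
  refine ⟨?_, ?_, ?_, ?_, dpeak_eq_dTan_phi A B⟩ <;> simp only [dpeak_eq_dTan_phi]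
  · exact dTan_nonneg (phi_nonneg A) (phi_nonneg B)
  · exact (dTan_eq_zero_iff (phi_nonneg A) (phi_nonneg B)).trans phi_injective.eq_iff
  · exact dTan_comm _ _
  · exact dTan_triangle (phi_nonneg A) (phi_nonneg B) (phi_nonneg C)
end

section
/- The min–max (Tanimoto) kernel is positive semidefinite on the nonnegative orthant: for any finite collection u₁,…,u_m ∈ ℝ₊^d and any real coefficients c₁,…,c_m, Σᵢ Σⱼ cᵢ cⱼ k_MinMax(uᵢ, uⱼ) ≥ 0. -/
/-!
For nonnegative `u, v` with coordinate sums `a, b` and `m = ∑ₖ min (u k) (v k)`, the identity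
`min + max = u + v` gives `∑ₖ max (u k) (v k) = a + b - m`, so with `r = m / (a + b) ∈ [0, 1/2]`
the kernel is `r / (1 - r) = ∑_{n ≥ 1} rⁿ`. The matrix of `r` is the Schur product of a sum of
min kernels, which are Gram matrices of indicators `1_{[0, x]}`, with the kernel
`1 / (a + b) = ∫₀^∞ e^{-a t} e^{-b t} dt`; hence it is positive semidefinite, and so are its Schur
powers and their sum. The zero vectors, where the kernel is `1` but `r = 0`, contribute a rank-one
positive semidefinite correction.
-/

open Finset

/-- Min–max (Tanimoto) kernel on nonnegative vectors:
`k_MinMax(u,v) = (Σⱼ min uⱼ vⱼ) / (Σⱼ max uⱼ vⱼ)` when the denominator is positive,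
and `1` otherwise (for nonnegative vectors this is exactly the case `u = v = 0`). -/
noncomputable def kMinMax {ι : Type*} [Fintype ι] (u v : ι → ℝ) : ℝ :=
  if 0 < ∑ j, max (u j) (v j) then (∑ j, min (u j) (v j)) / (∑ j, max (u j) (v j)) else 1

open Matrix MeasureTheory Set
open scoped ComplexOrder

namespace Matrix

variable {ι 𝕜 : Type*} [Fintype ι] [RCLike 𝕜]

theorem PosSemidef.map_pow {A : Matrix ι ι 𝕜} (hA : A.PosSemidef) (n : ℕ) :
    (A.map (· ^ n)).PosSemidef := by
  induction n with
  | zero =>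
    convert posSemidef_vecMulVec_self_star (1 : ι → 𝕜) using 1
    ext i j
    simp [vecMulVec]
  | succ n ih =>
    convert ih.hadamard hA using 1
    ext i j
    simp [pow_succ]

theorem PosSemidef.of_hasSum {A : ℕ → Matrix ι ι 𝕜} {B : Matrix ι ι 𝕜}
    (hA : ∀ n, (A n).PosSemidef) (hB : HasSum A B) : B.PosSemidef := by
  obtain rfl := hB.tsum_eq
  refine .of_dotProduct_mulVec_nonneg ?_ fun x => ?_
  · simp only [IsHermitian, conjTranspose_tsum, (hA _).isHermitian.eq]
  · let q : Matrix ι ι 𝕜 →+ 𝕜 := AddMonoidHom.mk' (fun M => star x ⬝ᵥ (M *ᵥ x))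
      (by simp [add_mulVec, dotProduct_add])
    change 0 ≤ q (∑' n, A n)
    rw [hB.summable.map_tsum q
      (show Continuous fun M : Matrix ι ι 𝕜 => star x ⬝ᵥ (M *ᵥ x) by fun_prop)]
    exact tsum_nonneg fun n => (hA n).dotProduct_mulVec_nonneg x

theorem PosSemidef.map_div_one_sub {A : Matrix ι ι 𝕜} (hA : A.PosSemidef)
    (hA1 : ∀ i j, ‖A i j‖ < 1) : (A.map fun x => x / (1 - x)).PosSemidef := by
  refine .of_hasSum (fun n => hA.map_pow (n + 1)) (Pi.hasSum.2 fun i => Pi.hasSum.2 fun j => ?_)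
  simpa [pow_succ', div_eq_mul_inv] using
    (hasSum_geometric_of_norm_lt_one (hA1 i j)).mul_left (A i j)

theorem posSemidef_min {a : ι → ℝ} (ha : ∀ i, 0 ≤ a i) :
    (of fun i j => min (a i) (a j)).PosSemidef := by
  convert posSemidef_matrix_measure_inter (μ := volume) (s := fun i => Icc 0 (a i))
    (fun _ => measurableSet_Icc) (fun _ => measure_Icc_lt_top.ne) using 1
  ext i j
  simp [Icc_inter_Icc, ha i, ha j]

theorem posSemidef_integral_mul {α : Type*} [MeasurableSpace α] {μ : Measure α} {f : ι → α → ℝ}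
    (hf : ∀ i, MemLp (f i) 2 μ) : (of fun i j => ∫ x, f i x * f j x ∂μ).PosSemidef := by
  have hgram : (of fun i j => ∫ x, f i x * f j x ∂μ) = gram ℝ fun i => (hf i).toLp (f i) := by
    ext i j
    rw [of_apply, gram_apply, L2.inner_def]
    refine integral_congr_ae ?_
    filter_upwards [(hf i).coeFn_toLp, (hf j).coeFn_toLp] with x hi hj
    simp [hi, hj, mul_comm]
  exact hgram ▸ posSemidef_gram ℝ _

theorem posSemidef_inv_add {s : ι → ℝ} (hs : ∀ i, 0 < s i) :
    (of fun i j => (s i + s j)⁻¹).PosSemidef := by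
  have hexp : ∀ i, MemLp (fun t => Real.exp (-s i * t)) 2 (volume.restrict (Ioi 0)) := by
    intro i
    refine (memLp_two_iff_integrable_sq (by fun_prop)).2 ?_
    refine (integrableOn_exp_mul_Ioi (a := -(2 * s i)) (by linarith [hs i]) 0).congr_fun
      (fun t _ => ?_) measurableSet_Ioi
    rw [← Real.exp_nat_mul]
    ring_nf
  convert posSemidef_integral_mul hexp using 1
  ext i j
  have hij : -(s i + s j) < 0 := by linarith [hs i, hs j]
  simp only [of_apply, ← Real.exp_add, ← add_mul, ← neg_add]
  rw [integral_exp_mul_Ioi hij, mul_zero, Real.exp_zero, neg_div_neg_eq, one_div]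

end Matrix

section

variable {κ : Type*} [Fintype κ]

theorem sum_min_add_sum_max (u v : κ → ℝ) :
    ∑ k, min (u k) (v k) + ∑ k, max (u k) (v k) = ∑ k, u k + ∑ k, v k := by
  rw [← sum_add_distrib, ← sum_add_distrib]
  exact sum_congr rfl fun k _ => min_add_max (u k) (v k)

theorem sum_min_nonneg {u v : κ → ℝ} (hu : 0 ≤ u) (hv : 0 ≤ v) : 0 ≤ ∑ k, min (u k) (v k) :=
  sum_nonneg fun k _ => le_min (hu k) (hv k)

theorem sum_min_le_sum_left (u v : κ → ℝ) : ∑ k, min (u k) (v k) ≤ ∑ k, u k :=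
  sum_le_sum fun _ _ => min_le_left _ _

theorem sum_min_le_sum_right (u v : κ → ℝ) : ∑ k, min (u k) (v k) ≤ ∑ k, v k :=
  sum_le_sum fun _ _ => min_le_right _ _

theorem norm_sum_min_div_sum_add_lt_one {u v : κ → ℝ} (hu : 0 ≤ u) (hv : 0 ≤ v) :
    ‖(∑ k, min (u k) (v k)) / (∑ k, u k + ∑ k, v k)‖ < 1 := by
  have ha : 0 ≤ ∑ k, u k := sum_nonneg fun k _ => hu k
  have hb : 0 ≤ ∑ k, v k := sum_nonneg fun k _ => hv k
  have hMa := sum_min_le_sum_left u v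
  have hMb := sum_min_le_sum_right u v
  rcases (add_nonneg ha hb).eq_or_lt with hab | hab
  · simp [← hab]
  · rw [norm_div, Real.norm_of_nonneg (sum_min_nonneg hu hv), Real.norm_of_nonneg hab.le,
      div_lt_one hab]
    linarith

/-- At `u = v = 0` the ratio is `0 / 0 = 0`, and the product of indicators supplies the value `1`. -/
theorem kMinMax_eq {u v : κ → ℝ} (hu : 0 ≤ u) (hv : 0 ≤ v) :
    kMinMax u v =
      (∑ k, min (u k) (v k)) / (∑ k, u k + ∑ k, v k) /
          (1 - (∑ k, min (u k) (v k)) / (∑ k, u k + ∑ k, v k)) +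
        (if ∑ k, u k = 0 then 1 else 0) * (if ∑ k, v k = 0 then 1 else 0) := by
  have ha : 0 ≤ ∑ k, u k := sum_nonneg fun k _ => hu k
  have hb : 0 ≤ ∑ k, v k := sum_nonneg fun k _ => hv k
  have hM := sum_min_nonneg hu hv
  have hMa := sum_min_le_sum_left u v
  have hMb := sum_min_le_sum_right u v
  have hmax : ∑ k, max (u k) (v k) = ∑ k, u k + ∑ k, v k - ∑ k, min (u k) (v k) := by
    linarith [sum_min_add_sum_max u v]
  rw [kMinMax, hmax]
  rcases (add_nonneg ha hb).eq_or_lt with hab | hab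
  · obtain ⟨ha0, hb0, hM0⟩ : ∑ k, u k = 0 ∧ ∑ k, v k = 0 ∧ ∑ k, min (u k) (v k) = 0 :=
      ⟨by linarith, by linarith, by linarith⟩
    simp [ha0, hb0, hM0]
  · have hz : (if ∑ k, u k = 0 then (1 : ℝ) else 0) * (if ∑ k, v k = 0 then 1 else 0) = 0 := by
      split_ifs <;> linarith
    rw [if_pos (by linarith), hz, add_zero]
    field_simp

variable {ι : Type*} [Fintype ι] {u : ι → κ → ℝ}

theorem posSemidef_sum_min (hu : ∀ i, 0 ≤ u i) :
    (of fun i j => ∑ k, min (u i k) (u j k)).PosSemidef := by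
  rw [show (of fun i j => ∑ k, min (u i k) (u j k)) = ∑ k, of fun i j => min (u i k) (u j k) by
    ext i j; simp [Matrix.sum_apply]]
  exact posSemidef_sum univ fun k _ => posSemidef_min fun i => hu i k

theorem posSemidef_sum_min_div_sum_add (hu : ∀ i, 0 ≤ u i) :
    (of fun i j => (∑ k, min (u i k) (u j k)) / (∑ k, u i k + ∑ k, u j k)).PosSemidef := by
  set s : ι → ℝ := fun i => ∑ k, u i k
  -- Zero sums may be replaced by `1`: the rows and columns of zero vectors vanish anyway.
  have hs : ∀ i, 0 < if s i = 0 then 1 else s i := fun i => by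
    split_ifs with h
    · exact one_pos
    · exact (sum_nonneg fun k _ => hu i k).lt_of_ne' h
  have hM0 : ∀ i j, s i = 0 ∨ s j = 0 → ∑ k, min (u i k) (u j k) = 0 := by
    rintro i j (h | h) <;> refine le_antisymm ?_ (sum_min_nonneg (hu i) (hu j))
    exacts [h ▸ sum_min_le_sum_left _ _, h ▸ sum_min_le_sum_right _ _]
  rw [show (of fun i j => (∑ k, min (u i k) (u j k)) / (∑ k, u i k + ∑ k, u j k)) =
      (of fun i j => ∑ k, min (u i k) (u j k)) ⊙
        of fun i j => ((if s i = 0 then 1 else s i) + if s j = 0 then 1 else s j)⁻¹ from ?_]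
  · exact (posSemidef_sum_min hu).hadamard (posSemidef_inv_add hs)
  ext i j
  by_cases h : s i = 0 ∨ s j = 0
  · simp [hM0 i j h]
  · rw [not_or] at h
    simp [s, h.1, h.2, div_eq_mul_inv]

theorem posSemidef_kMinMax (hu : ∀ i, 0 ≤ u i) :
    (of fun i j => kMinMax (u i) (u j)).PosSemidef := by
  let z : ι → ℝ := fun i => if ∑ k, u i k = 0 then 1 else 0
  rw [show (of fun i j => kMinMax (u i) (u j)) =
      (of fun i j => (∑ k, min (u i k) (u j k)) / (∑ k, u i k + ∑ k, u j k)).map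
        (fun x => x / (1 - x)) + vecMulVec z (star z) by
    ext i j; simp [kMinMax_eq (hu i) (hu j), vecMulVec, z]]
  exact ((posSemidef_sum_min_div_sum_add hu).map_div_one_sub fun i j =>
    norm_sum_min_div_sum_add_lt_one (hu i) (hu j)).add (posSemidef_vecMulVec_self_star z)

end

/-- The min–max (Tanimoto) kernel is positive semidefinite on the nonnegative orthant:
for any `u₁,…,u_m ∈ ℝ₊^d` and real coefficients `c₁,…,c_m`,
`Σᵢ Σⱼ cᵢ cⱼ k_MinMax(uᵢ,uⱼ) ≥ 0`. -/
theorem kMinMax_psd {d m : ℕ} (u : Fin m → Fin d → ℝ)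
    (hu : ∀ i j, 0 ≤ u i j) (c : Fin m → ℝ) :
    0 ≤ ∑ i : Fin m, ∑ j : Fin m, c i * c j * kMinMax (u i) (u j) := by
  have h := (posSemidef_kMinMax hu).dotProduct_mulVec_nonneg c
  simpa [dotProduct, mulVec, mul_sum, mul_comm, mul_left_comm] using h
end

section
/- The peak-to-peak kernel K_peak(A,B) = J_peak(A,B) is positive semidefinite on ℝⁿ: for any finite collection A₁,…,A_m ∈ ℝⁿ and any real coefficients c₁,…,c_m, Σᵢ Σⱼ cᵢ cⱼ J_peak(Aᵢ, Aⱼ) ≥ 0. -/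
open Finset

/-!
Coordinatewise, `N(A,B)` is a sum of kernels `min(a⁺, b⁺)`, each the Lebesgue measure of
`(0,a] ∩ (0,b]` and hence a Gram kernel, so `N` is positive semidefinite; by the Schur product
theorem so are its Hadamard powers and its Hadamard exponential `exp∘(tN)` for `t ≥ 0`. Writing
`s(A) = Σ |Aᵢ|`, one has `U_peak = s(A) + s(B) - N`, and the Laplace transform
`N / U_peak = ∫₀^∞ e^{-s(A)t} · N e^{tN} · e^{-s(B)t} dt` exhibits `J_peak` as an integral of
congruent copies of the positive semidefinite kernel `N ∘ exp∘(tN)`. Zero vectors, where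
`U_peak = 0` and `J_peak = 1`, contribute a rank-one positive semidefinite term.
-/

open Matrix MeasureTheory Set

namespace Matrix

lemma PosSemidef.add_sub_pos {ι : Type*} {N : Matrix ι ι ℝ} (hN : N.PosSemidef) {s : ι → ℝ}
    (hs : ∀ i j, N i j ≤ s i) {i j : ι} (hij : N i j ≠ 0) : 0 < s i + s j - N i j := by
  have hji : N j i = N i j := by simpa using hN.isHermitian.apply i j
  rcases hij.lt_or_gt with hneg | hpos
  · linarith [hN.diag_nonneg (i := i), hN.diag_nonneg (i := j), hs i i, hs j j]
  · linarith [hs i j, hs j i]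

variable {ι : Type*} [Fintype ι]

lemma star_dotProduct_mulVec_eq_sum_sum (M : Matrix ι ι ℝ) (c : ι → ℝ) :
    star c ⬝ᵥ (M *ᵥ c) = ∑ i, ∑ j, c i * c j * M i j := by
  simp only [dotProduct, mulVec, star_trivial, Finset.mul_sum]
  exact Finset.sum_congr rfl fun i _ => Finset.sum_congr rfl fun j _ => by ring

lemma PosSemidef.sum_sum_mul_nonneg {M : Matrix ι ι ℝ} (hM : M.PosSemidef) (c : ι → ℝ) :
    0 ≤ ∑ i, ∑ j, c i * c j * M i j :=
  star_dotProduct_mulVec_eq_sum_sum M c ▸ hM.dotProduct_mulVec_nonneg c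

lemma posSemidef_of_sum_sum_mul_nonneg {M : Matrix ι ι ℝ} (hsymm : ∀ i j, M j i = M i j)
    (h : ∀ c : ι → ℝ, 0 ≤ ∑ i, ∑ j, c i * c j * M i j) : M.PosSemidef :=
  .of_dotProduct_mulVec_nonneg (IsHermitian.ext hsymm) fun c =>
    star_dotProduct_mulVec_eq_sum_sum M c ▸ h c

lemma posSemidef_of_hasSum {M : ℕ → Matrix ι ι ℝ} {L : Matrix ι ι ℝ}
    (hM : ∀ k, (M k).PosSemidef) (hL : ∀ i j, HasSum (fun k => M k i j) (L i j)) :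
    L.PosSemidef := by
  refine posSemidef_of_sum_sum_mul_nonneg (fun i j => (hL j i).unique ?_) fun c => ?_
  · have hsymm : ∀ k, M k j i = M k i j := fun k => by simpa using (hM k).isHermitian.apply i j
    simpa only [hsymm] using hL i j
  · exact HasSum.nonneg (fun k => (hM k).sum_sum_mul_nonneg c)
      (hasSum_sum fun i _ => hasSum_sum fun j _ => (hL i j).mul_left (c i * c j))

lemma posSemidef_integral {α : Type*} [MeasurableSpace α] {μ : Measure α}
    {F : α → Matrix ι ι ℝ} (hF : ∀ᵐ t ∂μ, (F t).PosSemidef)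
    (hint : ∀ i j, Integrable (fun t => F t i j) μ) :
    (of fun i j => ∫ t, F t i j ∂μ).PosSemidef := by
  refine posSemidef_of_sum_sum_mul_nonneg (fun i j => integral_congr_ae ?_) fun c => ?_
  · filter_upwards [hF] with t ht
    simpa only [star_trivial] using ht.isHermitian.apply i j
  · have hsum : ∑ i, ∑ j, c i * c j * (of fun i j => ∫ t, F t i j ∂μ) i j
        = ∫ t, ∑ i, ∑ j, c i * c j * F t i j ∂μ := by
      rw [integral_finsetSum _ fun i _ => integrable_finsetSum _ fun j _ => (hint i j).const_mul _]
      simp only [integral_finsetSum _ fun j _ => (hint _ j).const_mul _, integral_const_mul,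
        of_apply]
    rw [hsum]
    exact integral_nonneg_of_ae (hF.mono fun t ht => ht.sum_sum_mul_nonneg c)

lemma PosSemidef.hadamard_pow {M : Matrix ι ι ℝ} (hM : M.PosSemidef) :
    ∀ k : ℕ, (of fun i j => M i j ^ k).PosSemidef
  | 0 => by simpa [vecMulVec] using posSemidef_vecMulVec_self_star (1 : ι → ℝ)
  | k + 1 => by
    have h : (of fun i j => M i j ^ (k + 1)) = (of fun i j => M i j ^ k) ⊙ M := by
      ext i j
      simp [pow_succ]
    rw [h]
    exact (hM.hadamard_pow k).hadamard hM

lemma PosSemidef.hadamard_exp {M : Matrix ι ι ℝ} (hM : M.PosSemidef) :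
    (of fun i j => Real.exp (M i j)).PosSemidef :=
  posSemidef_of_hasSum
    (fun k => (hM.hadamard_pow k).smul (by positivity : 0 ≤ (k.factorial⁻¹ : ℝ)))
    fun i j => by
      simpa [Real.exp_eq_exp_ℝ, div_eq_inv_mul] using NormedSpace.expSeries_div_hasSum_exp (M i j)

lemma posSemidef_min_max_zero (a : ι → ℝ) :
    (of fun i j => min (max (a i) 0) (max (a j) 0)).PosSemidef := by
  have h := posSemidef_matrix_measure_inter (μ := volume) (s := fun i => Ioc 0 (a i))
    (fun _ => measurableSet_Ioc) (fun _ => measure_Ioc_lt_top.ne)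
  simpa [Set.Ioc_inter_Ioc, Real.volume_real_Ioc, max_min_distrib_right] using h

lemma PosSemidef.mul_exp_neg_add_sub {N : Matrix ι ι ℝ} (hN : N.PosSemidef) (s : ι → ℝ)
    {t : ℝ} (ht : 0 ≤ t) :
    (of fun i j => N i j * Real.exp (-(s i + s j - N i j) * t)).PosSemidef := by
  classical
  let D : Matrix ι ι ℝ := diagonal fun i => Real.exp (-s i * t)
  have heq : (of fun i j => N i j * Real.exp (-(s i + s j - N i j) * t))
      = Dᴴ * (N ⊙ of fun i j => Real.exp ((t • N) i j)) * D := by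
    ext i j
    simp only [D, diagonal_conjTranspose, star_trivial, diagonal_mul, mul_diagonal,
      hadamard_apply, of_apply, smul_apply, smul_eq_mul]
    rw [mul_comm (Real.exp _), mul_assoc, mul_assoc, ← Real.exp_add, ← Real.exp_add]
    ring_nf
  rw [heq]
  exact (hN.hadamard (hN.smul ht).hadamard_exp).conjTranspose_mul_mul_same D

theorem PosSemidef.div_add_sub {N : Matrix ι ι ℝ} (hN : N.PosSemidef) {s : ι → ℝ}
    (hs : ∀ i j, N i j ≤ s i) : (of fun i j => N i j / (s i + s j - N i j)).PosSemidef := by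
  have hlaplace : ∀ i j, N i j / (s i + s j - N i j)
      = ∫ t in Ioi 0, N i j * Real.exp (-(s i + s j - N i j) * t) := by
    intro i j
    by_cases h0 : N i j = 0
    · simp [h0]
    · rw [integral_const_mul, integral_exp_mul_Ioi (neg_neg_of_pos (hN.add_sub_pos hs h0)),
        mul_zero, Real.exp_zero, neg_div_neg_eq, mul_one_div]
  have hint : ∀ i j,
      IntegrableOn (fun t => N i j * Real.exp (-(s i + s j - N i j) * t)) (Ioi 0) := by
    intro i j
    by_cases h0 : N i j = 0
    · simp [h0]
    · exact (integrableOn_exp_mul_Ioi (neg_neg_of_pos (hN.add_sub_pos hs h0)) 0).const_mul _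
  simp_rw [hlaplace]
  exact posSemidef_integral
    ((ae_restrict_mem measurableSet_Ioi).mono fun t ht => hN.mul_exp_neg_add_sub s ht.le) hint

end Matrix

lemma ite_mul_pos_min_abs (a b : ℝ) : (if 0 < a * b then min |a| |b| else 0)
    = min (max a 0) (max b 0) + min (max (-a) 0) (max (-b) 0) := by
  rcases le_or_gt a 0 with ha | ha <;> rcases le_or_gt b 0 with hb | hb
  · rcases ha.lt_or_eq with ha | rfl
    · rcases hb.lt_or_eq with hb | rfl
      · simp [mul_pos_of_neg_of_neg ha hb, abs_of_neg, ha, hb, ha.le, hb.le]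
      · simp [ha.le]
    · simp
  · simp [mul_nonpos_of_nonpos_of_nonneg ha hb.le, ha, hb.le]
  · simp [mul_nonpos_of_nonneg_of_nonpos ha.le hb, ha.le, hb]
  · simp [mul_pos ha hb, abs_of_pos, ha, hb, ha.le, hb.le]

lemma sum_abs_pos {ι : Type*} [Fintype ι] {A : ι → ℝ} (hA : A ≠ 0) : 0 < ∑ k, |A k| := by
  obtain ⟨k, hk⟩ := Function.ne_iff.mp hA
  exact Finset.sum_pos' (fun k _ => abs_nonneg _) ⟨k, Finset.mem_univ k, abs_pos.mpr hk⟩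

section Peak

variable {n : ℕ}

lemma Npeak_eq_sum (A B : Fin n → ℝ) : Npeak A B
    = ∑ k, (min (max (A k) 0) (max (B k) 0) + min (max (-A k) 0) (max (-B k) 0)) := by
  rw [Npeak, Finset.sum_filter]
  exact Finset.sum_congr rfl fun k _ => ite_mul_pos_min_abs (A k) (B k)

lemma Npeak_le_left (A B : Fin n → ℝ) : Npeak A B ≤ ∑ k, |A k| := by
  rw [Npeak_eq_sum]
  refine Finset.sum_le_sum fun k _ => ?_
  rw [← max_zero_add_max_neg_zero_eq_abs_self]
  exact add_le_add (min_le_left _ _) (min_le_left _ _)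

lemma Npeak_le_right (A B : Fin n → ℝ) : Npeak A B ≤ ∑ k, |B k| := by
  rw [Npeak_eq_sum]
  refine Finset.sum_le_sum fun k _ => ?_
  rw [← max_zero_add_max_neg_zero_eq_abs_self]
  exact add_le_add (min_le_right _ _) (min_le_right _ _)

lemma Upeak_eq (A B : Fin n → ℝ) : Upeak A B = ∑ k, |A k| + ∑ k, |B k| - Npeak A B := by
  rw [Upeak, Npeak_eq_sum, ← Finset.sum_add_distrib, ← Finset.sum_sub_distrib]
  refine Finset.sum_congr rfl fun k _ => ?_
  rw [← max_zero_add_max_neg_zero_eq_abs_self, ← max_zero_add_max_neg_zero_eq_abs_self (B k)]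
  linarith [max_add_min (max (A k) 0) (max (B k) 0), max_add_min (max (-A k) 0) (max (-B k) 0)]

lemma Upeak_pos {A B : Fin n → ℝ} (h : A ≠ 0 ∨ B ≠ 0) : 0 < Upeak A B := by
  have hA : 0 ≤ ∑ k, |A k| := Finset.sum_nonneg fun k _ => abs_nonneg _
  have hB : 0 ≤ ∑ k, |B k| := Finset.sum_nonneg fun k _ => abs_nonneg _
  rw [Upeak_eq]
  rcases h with h | h
  · linarith [sum_abs_pos h, Npeak_le_right A B]
  · linarith [sum_abs_pos h, Npeak_le_left A B]

-- For `A = B = 0` the quotient is the junk value `N / 0 = 0`.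
lemma Jpeak_eq (A B : Fin n → ℝ) :
    Jpeak A B = Npeak A B / Upeak A B + if A = 0 ∧ B = 0 then 1 else 0 := by
  rw [Jpeak]
  by_cases h : A = 0 ∧ B = 0
  · obtain ⟨rfl, rfl⟩ := h
    simp [Upeak]
  · rw [if_pos (Upeak_pos (not_and_or.mp h)), if_neg h, add_zero]

lemma posSemidef_Npeak {ι : Type*} [Fintype ι] (A : ι → Fin n → ℝ) :
    (of fun i j => Npeak (A i) (A j)).PosSemidef := by
  have h : (of fun i j => Npeak (A i) (A j))
      = ∑ k, ((of fun i j => min (max (A i k) 0) (max (A j k) 0))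
        + of fun i j => min (max (-A i k) 0) (max (-A j k) 0)) := by
    ext i j
    simp [Npeak_eq_sum, Matrix.sum_apply]
  rw [h]
  exact posSemidef_sum _ fun k _ =>
    (posSemidef_min_max_zero _).add (posSemidef_min_max_zero fun i => -A i k)

end Peak

/-- The peak-to-peak kernel `K_peak = J_peak` is positive semidefinite on `ℝⁿ`:
for any finite collection `A₁,…,A_m ∈ ℝⁿ` and real coefficients `c₁,…,c_m`,
`Σᵢ Σⱼ cᵢ cⱼ J_peak(Aᵢ,Aⱼ) ≥ 0`. -/
theorem Jpeak_kernel_psd {n m : ℕ} (A : Fin m → Fin n → ℝ) (c : Fin m → ℝ) :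
    0 ≤ ∑ i : Fin m, ∑ j : Fin m, c i * c j * Jpeak (A i) (A j) := by
  classical
  let z : Fin m → ℝ := fun i => if A i = 0 then 1 else 0
  have hJ : (of fun i j => Jpeak (A i) (A j))
      = (of fun i j => Npeak (A i) (A j) / Upeak (A i) (A j)) + vecMulVec z (star z) := by
    ext i j
    by_cases hi : A i = 0 <;> by_cases hj : A j = 0 <;> simp [Jpeak_eq, vecMulVec, z, hi, hj]
  have hratio : (of fun i j => Npeak (A i) (A j) / Upeak (A i) (A j)).PosSemidef := by
    simp_rw [Upeak_eq]
    exact (posSemidef_Npeak A).div_add_sub fun i j => Npeak_le_left _ _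
  have hpsd := hJ ▸ hratio.add (posSemidef_vecMulVec_self_star z)
  exact hpsd.sum_sum_mul_nonneg c
end
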